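/- For a ∈ ℝ^{n+1} define q(a) ∈ ℝ^{n+1} by q_k(a) := Σ_{i=0}^{n−k} a_i a_{i+k} for k = 0, …, n (the coefficients of a(z) a(z^{−1})). Then: (i) the Jacobian matrix J(a) := [∂q_i(a)/∂a_j]_{i,j=0}^n equals the sum of the Hankel matrix with (i,j) entry a_{i+j} (with a_k := 0 for k > n) and the upper-triangular Toeplitz matrix with (i,j) entry a_{j−i} for j ≥ i and 0 otherwise; (ii) J(a) is nonsingular for every Schur vector a; (iii) for every a with a(ζ_j) ≠ 0 for all j, the chain rule ∇𝕁_P(a) = J(a)ᵀ ∇F(q(a)) holds, where F(q) := c_0 q_0 + 2 Σ_{k=1}^n c_k q_k − (1/2N) Σ_{j=−N+1}^N P(ζ_j) log Q(ζ_j) and Q(ζ) := Σ_{k=−n}^n q_{|k|} ζ^{−k}. -/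

import Mathlib

/-!
Write `r(x, y)_t = Σᵢ xᵢ y_{i+t}`, so that `q(a) = r(a, a)`. Since `q` is quadratic,
`J(a) v = r(a, v) + r(v, a)`, and the Hankel and the upper triangular Toeplitz matrix of `a` send
`v` to `r(v, a)` and to `r(a, v)`: this is (i).

Multiplying out the Laurent polynomials gives
`a(z) v(z⁻¹) + v(z) a(z⁻¹) = Σ_{|k| ≤ n} (J(a) v)_{|k|} z^{-k}`. If `J(a) v = 0`, multiplying by
`zⁿ` gives the polynomial identity `â ṽ + v̂ ã = 0`, where `â(z) = zⁿ a(z)` and `ã(z) = a(z⁻¹)`.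
A common root `z` of `â` and `ã` would be nonzero with both `z` and `z⁻¹` roots of `â`, which is
impossible for Schur `a`; so `â ∣ v̂`, by degrees `v̂ = μ â`, hence `ṽ = -μ ã`, and reading off `v₀`
in both gives `μ = 0`, i.e. `v = 0`: this is (ii).

For `v = a` the same expansion reads `a(ζ) a(ζ⁻¹) = Q(ζ)` with `Q` built from `q(a)`, and likewise
`aᵀ Tₙ a = ⟨c, q(a)⟩`. Thus `𝕁_P = F ∘ q`, and (iii) is the chain rule; `F` is differentiable at
`q(a)` because `Q(ζ_j) = |a(ζ_j)|² > 0` on the unit circle.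
-/

open Finset Complex Matrix

noncomputable section

/-- The point `ζ_j = exp(iπ j / N)` of the discrete unit circle `𝕋_{2N}`. -/
def zeta (N : ℕ) (j : ℤ) : ℂ := Complex.exp (Real.pi * Complex.I * j / N)

/-- The index set `j = -N+1, …, N`. -/
def Idx (N : ℕ) : Finset ℤ := Finset.Icc (-(N : ℤ) + 1) (N : ℤ)

/-- `a(ζ) = Σ_{k=0}^n a_k ζ^{-k}`. -/
def evC {n : ℕ} (a : Fin (n + 1) → ℝ) (z : ℂ) : ℂ :=
  ∑ k : Fin (n + 1), (a k : ℂ) * z ^ (-(k.val : ℤ))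

/-- The symmetric Toeplitz matrix `T_n` with `(i,j)` entry `c_{|i-j|}`. -/
def Toep {n : ℕ} (c : Fin (n + 1) → ℝ) : Matrix (Fin (n + 1)) (Fin (n + 1)) ℝ :=
  fun i j => c ⟨max ((i : ℕ) - (j : ℕ)) ((j : ℕ) - (i : ℕ)),
    by have := i.isLt; have := j.isLt; omega⟩

/-- `P(ζ) = b(ζ) b(ζ^{-1})`. -/
def PPd {n : ℕ} (b : Fin (n + 1) → ℝ) (z : ℂ) : ℂ := evC b z * evC b z⁻¹

/-- `𝕁_P(a) = aᵀ T_n a − (1/2N) Σ_j P(ζ_j) log( a(ζ_j) a(ζ_j^{-1}) )`. -/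
def Jd (N : ℕ) {n : ℕ} (c b a : Fin (n + 1) → ℝ) : ℝ :=
  dotProduct a ((Toep c).mulVec a) -
    (∑ j ∈ Idx N, (PPd b (zeta N j)).re *
        Real.log ((evC a (zeta N j) * evC a (zeta N j)⁻¹).re)) / (2 * N)

/-- `γ_t(a) = (1/2N) Σ_j ζ_j^t b(ζ_j)/a(ζ_j)` (a real number). -/
def gam (N : ℕ) {n : ℕ} (b a : Fin (n + 1) → ℝ) (t : ℤ) : ℝ :=
  ((∑ j ∈ Idx N, zeta N j ^ t * evC b (zeta N j) / evC a (zeta N j)) / (2 * N)).re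

/-- The matrix `T_γ(a)` with `(i,j)` entry `γ_{j−i}(a)`. -/
def Tgam (N : ℕ) {n : ℕ} (b a : Fin (n + 1) → ℝ) :
    Matrix (Fin (n + 1)) (Fin (n + 1)) ℝ :=
  fun i j => gam N b a ((j.val : ℤ) - (i.val : ℤ))

/-- `c̃_k(a) = (1/2N) Σ_j ζ_j^k P(ζ_j)/( a(ζ_j) a(ζ_j^{-1}) )` (a real number). -/
def ctil (N : ℕ) {n : ℕ} (b a : Fin (n + 1) → ℝ) (k : ℤ) : ℝ :=
  ((∑ j ∈ Idx N, zeta N j ^ k * PPd b (zeta N j) /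
      (evC a (zeta N j) * evC a (zeta N j)⁻¹)) / (2 * N)).re

/-- The symmetric Toeplitz matrix `T_n(a)` with `(i,j)` entry `c̃_{|i−j|}(a)`. -/
def TnA (N : ℕ) {n : ℕ} (b a : Fin (n + 1) → ℝ) :
    Matrix (Fin (n + 1)) (Fin (n + 1)) ℝ :=
  fun i j => ctil N b a ((max ((i : ℕ) - (j : ℕ)) ((j : ℕ) - (i : ℕ)) : ℕ) : ℤ)


/-- The symmetric pseudo-polynomial `Σ_{k=-n}^n q_{|k|} ζ^{-k}`. -/
def ppC {n : ℕ} (q : Fin (n + 1) → ℝ) (z : ℂ) : ℂ :=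
  ∑ k : Fin (n + 1), (q k : ℂ) * (z ^ (k.val : ℤ) + z ^ (-(k.val : ℤ))) - (q 0 : ℂ)

/-- `a` is Schur. -/
def SchurVec {n : ℕ} (a : Fin (n + 1) → ℝ) : Prop :=
  0 < a 0 ∧ ∀ z : ℂ,
    (∑ k : Fin (n + 1), (a k : ℂ) * z ^ (n - k.val)) = 0 → ‖z‖ < 1

/-- `q_k(a) = Σ_{i=0}^{n−k} a_i a_{i+k}`, the coefficients of `a(z) a(z⁻¹)`. -/
def qc {n : ℕ} (a : Fin (n + 1) → ℝ) : Fin (n + 1) → ℝ :=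
  fun k => ∑ i : Fin (n + 1),
    if h : (i : ℕ) + (k : ℕ) ≤ n then a i * a ⟨(i : ℕ) + (k : ℕ), by omega⟩ else 0

/-- The Jacobian matrix `J(a) = [∂q_i(a)/∂a_j]`. -/
def JacQ {n : ℕ} (a : Fin (n + 1) → ℝ) : Matrix (Fin (n + 1)) (Fin (n + 1)) ℝ :=
  fun i j => fderiv ℝ (fun x => qc x i) a (Pi.single j 1)

/-- The Hankel matrix with `(i,j)` entry `a_{i+j}` (`a_k := 0` for `k > n`). -/
def Hank {n : ℕ} (a : Fin (n + 1) → ℝ) : Matrix (Fin (n + 1)) (Fin (n + 1)) ℝ :=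
  fun i j => if h : (i : ℕ) + (j : ℕ) ≤ n then a ⟨(i : ℕ) + (j : ℕ), by omega⟩ else 0

/-- The upper-triangular Toeplitz matrix with `(i,j)` entry `a_{j−i}` for `j ≥ i`. -/
def UTToep {n : ℕ} (a : Fin (n + 1) → ℝ) : Matrix (Fin (n + 1)) (Fin (n + 1)) ℝ :=
  fun i j => if h : (i : ℕ) ≤ (j : ℕ) then
    a ⟨(j : ℕ) - (i : ℕ), by have := j.isLt; omega⟩ else 0

/-- The pairing `⟨c, p⟩`. -/
def pairCP {n : ℕ} (c p : Fin (n + 1) → ℝ) : ℝ :=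
  2 * ∑ k : Fin (n + 1), c k * p k - c 0 * p 0

/-- `F(q) = c_0 q_0 + 2 Σ_{k=1}^n c_k q_k − (1/2N) Σ_j P(ζ_j) log Q(ζ_j)`,
with `P(ζ) = b(ζ) b(ζ^{-1})` and `Q(ζ) = Σ_{k=-n}^n q_{|k|} ζ^{-k}`. -/
def Fd (N : ℕ) {n : ℕ} (c b q : Fin (n + 1) → ℝ) : ℝ :=
  pairCP c q -
    (∑ j ∈ Idx N, (PPd b (zeta N j)).re * Real.log ((ppC q (zeta N j)).re)) / (2 * N)

/-- The gradient vector of a functional on `ℝ^{n+1}`. -/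
def gradVec {n : ℕ} (f : (Fin (n + 1) → ℝ) → ℝ) (a : Fin (n + 1) → ℝ) :
    Fin (n + 1) → ℝ :=
  fun i => fderiv ℝ f a (Pi.single i 1)

section Reindexing

variable {M : Type*}

lemma sum_shift_eq_sum_ite [AddCommMonoid M] {m : ℕ} (f : ℕ → M)
    (hf : ∀ l, m ≤ l → f l = 0) (k : ℕ) :
    ∑ i : Fin m, f (i + k) = ∑ l : Fin m, if k ≤ (l : ℕ) then f l else 0 := by
  simp only [add_comm _ k]
  rw [Fin.sum_univ_eq_sum_range (fun i => f (k + i)),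
    Fin.sum_univ_eq_sum_range (fun l => if k ≤ l then f l else 0), ← Finset.sum_filter,
    show (range m).filter (k ≤ ·) = Ico k m by ext; simp [and_comm], sum_Ico_eq_sum_range]
  exact (Finset.sum_subset (range_subset_range.2 (Nat.sub_le m k))
    fun t _ ht => hf _ (by simp at ht; omega)).symm

lemma sum_sum_eq_upper_add_lower_sub_diag [AddCommGroup M] {m : ℕ} (F : ℕ → ℕ → M)
    (hF : ∀ k l, m ≤ k ∨ m ≤ l → F k l = 0) :
    ∑ k : Fin m, ∑ l : Fin m, F k l =
      ∑ t : Fin m, ∑ k : Fin m, F k (k + t) + ∑ t : Fin m, ∑ l : Fin m, F (l + t) l -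
        ∑ k : Fin m, F k k := by
  have split (k l : ℕ) : F k l =
      (if k ≤ l then F k l else 0) + (if l ≤ k then F k l else 0) -
        if k = l then F k l else 0 := by
    rcases lt_trichotomy k l with h | rfl | h
    · simp [h.le, h.not_ge, h.ne]
    · simp
    · simp [h.le, h.not_ge, h.ne']
  have upper : ∑ t : Fin m, ∑ k : Fin m, F k (k + t) =
      ∑ k : Fin m, ∑ l : Fin m, if (k : ℕ) ≤ l then F k l else 0 := by
    rw [Finset.sum_comm]
    refine Finset.sum_congr rfl fun k _ => ?_
    simp only [add_comm (k : ℕ)]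
    exact sum_shift_eq_sum_ite _ (fun l hl => hF k l (.inr hl)) k
  have lower : ∑ t : Fin m, ∑ l : Fin m, F (l + t) l =
      ∑ k : Fin m, ∑ l : Fin m, if (l : ℕ) ≤ k then F k l else 0 := by
    rw [Finset.sum_comm]
    conv_rhs => rw [Finset.sum_comm]
    refine Finset.sum_congr rfl fun l _ => ?_
    simp only [add_comm (l : ℕ)]
    exact sum_shift_eq_sum_ite _ (fun k hk => hF k l (.inl hk)) l
  have diag :
      ∑ k : Fin m, F k k = ∑ k : Fin m, ∑ l : Fin m, if (k : ℕ) = l then F k l else 0 := by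
    refine Finset.sum_congr rfl fun k _ => ?_
    simp [Fin.val_inj]
  rw [upper, lower, diag, ← Finset.sum_add_distrib, ← Finset.sum_sub_distrib]
  refine Finset.sum_congr rfl fun k _ => ?_
  rw [← Finset.sum_add_distrib, ← Finset.sum_sub_distrib]
  exact Finset.sum_congr rfl fun l _ => split k l

end Reindexing

section Correlation

variable {n : ℕ}

def zeroExt (m : ℕ) : (Fin (n + 1) → ℝ) →L[ℝ] ℝ :=
  if h : m ≤ n then ContinuousLinearMap.proj ⟨m, by omega⟩ else 0

lemma zeroExt_apply (m : ℕ) (x : Fin (n + 1) → ℝ) :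
    zeroExt m x = if h : m ≤ n then x ⟨m, by omega⟩ else 0 := by
  unfold zeroExt; split_ifs <;> rfl

@[simp]
lemma zeroExt_val (k : Fin (n + 1)) (x : Fin (n + 1) → ℝ) : zeroExt k x = x k := by
  rw [zeroExt_apply, dif_pos (by omega)]

lemma zeroExt_zero (x : Fin (n + 1) → ℝ) : zeroExt 0 x = x 0 :=
  zeroExt_val 0 x

lemma zeroExt_of_lt {m : ℕ} (h : n < m) : zeroExt (n := n) m = 0 :=
  dif_neg (by omega)

def crossCorr (x y : Fin (n + 1) → ℝ) (t : ℕ) : ℝ :=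
  ∑ i : Fin (n + 1), x i * zeroExt (i + t) y

def polar (x y : Fin (n + 1) → ℝ) : Fin (n + 1) → ℝ :=
  fun k => crossCorr x y k + crossCorr y x k

lemma qc_apply_eq_crossCorr (a : Fin (n + 1) → ℝ) (k : Fin (n + 1)) :
    qc a k = crossCorr a a k := by
  refine Finset.sum_congr rfl fun i _ => ?_
  rw [zeroExt_apply, mul_dite, mul_zero]

end Correlation

section Jacobian

variable {n : ℕ}

lemma hank_mulVec (a v : Fin (n + 1) → ℝ) (k : Fin (n + 1)) :
    (Hank a *ᵥ v) k = crossCorr v a k := by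
  simp only [mulVec, dotProduct, crossCorr]
  refine Finset.sum_congr rfl fun j _ => ?_
  rw [mul_comm, add_comm (j : ℕ), zeroExt_apply]
  rfl

lemma utToep_mulVec (a v : Fin (n + 1) → ℝ) (k : Fin (n + 1)) :
    (UTToep a *ᵥ v) k = crossCorr a v k := by
  have h := sum_shift_eq_sum_ite (m := n + 1) (fun l => zeroExt (l - k) a * zeroExt l v)
    (fun l hl => by rw [zeroExt_of_lt (by omega : n < l), _root_.zero_apply, mul_zero]) k
  simp only [add_tsub_cancel_right, zeroExt_val] at h
  simp only [mulVec, dotProduct, crossCorr, h]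
  refine Finset.sum_congr rfl fun j _ => ?_
  by_cases hkj : (k : ℕ) ≤ j
  · simp [UTToep, hkj, zeroExt_apply, show (j : ℕ) - k ≤ n by omega]
  · simp [UTToep, hkj]

lemma hank_add_utToep_mulVec (a v : Fin (n + 1) → ℝ) :
    (Hank a + UTToep a) *ᵥ v = polar a v := by
  ext k
  rw [add_mulVec, Pi.add_apply, hank_mulVec, utToep_mulVec, polar, add_comm]

lemma hasFDerivAt_qc_apply (a : Fin (n + 1) → ℝ) (k : Fin (n + 1)) :
    HasFDerivAt (fun x => qc x k)
      (∑ i : Fin (n + 1),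
        (a i • zeroExt (i + k) + zeroExt (i + k) a • ContinuousLinearMap.proj i)) a := by
  simp_rw [qc_apply_eq_crossCorr, crossCorr]
  exact HasFDerivAt.fun_sum fun i _ => (hasFDerivAt_apply i a).mul (zeroExt _).hasFDerivAt

lemma fderiv_qc_apply (a v : Fin (n + 1) → ℝ) (k : Fin (n + 1)) :
    fderiv ℝ (fun x => qc x k) a v = polar a v k := by
  simp [(hasFDerivAt_qc_apply a k).fderiv, polar, crossCorr, Finset.sum_add_distrib, mul_comm]

lemma differentiableAt_qc (a : Fin (n + 1) → ℝ) : DifferentiableAt ℝ qc a :=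
  differentiableAt_pi.2 fun k => (hasFDerivAt_qc_apply a k).differentiableAt

lemma jacQ_eq_hank_add_utToep (a : Fin (n + 1) → ℝ) : JacQ a = Hank a + UTToep a := by
  ext i j
  have h := congrFun (hank_add_utToep_mulVec a (Pi.single j 1)) i
  rw [mulVec_single_one] at h
  exact (fderiv_qc_apply a _ i).trans h.symm

end Jacobian

section Laurent

variable {n : ℕ}

lemma evC_mul_evC_inv (x y : Fin (n + 1) → ℝ) {z : ℂ} (hz : z ≠ 0) :
    evC x z * evC y z⁻¹ =
      ∑ t : Fin (n + 1),
          ((crossCorr x y t : ℂ) * z ^ (t : ℤ) + (crossCorr y x t : ℂ) * z ^ (-(t : ℤ))) -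
        (crossCorr x y 0 : ℂ) := by
  set F : ℕ → ℕ → ℂ := fun k l => (zeroExt k x : ℂ) * (zeroExt l y : ℂ) * z ^ ((l : ℤ) - k)
  have hF : ∀ k l, n + 1 ≤ k ∨ n + 1 ≤ l → F k l = 0 := by
    rintro k l (h | h) <;> simp [F, zeroExt_of_lt (show n < _ from h)]
  have hprod : evC x z * evC y z⁻¹ = ∑ k : Fin (n + 1), ∑ l : Fin (n + 1), F k l := by
    rw [evC, evC, Finset.sum_mul_sum]
    refine Finset.sum_congr rfl fun k _ => Finset.sum_congr rfl fun l _ => ?_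
    simp only [F, zeroExt_val]
    rw [_root_.inv_zpow', neg_neg, zpow_sub₀ hz, _root_.zpow_neg]
    ring
  rw [hprod, sum_sum_eq_upper_add_lower_sub_diag F hF, Finset.sum_add_distrib]
  simp only [F, crossCorr, zeroExt_val]
  push_cast
  simp only [Finset.sum_mul]
  congr 1
  · congr 1 <;> refine Finset.sum_congr rfl fun t _ => Finset.sum_congr rfl fun k _ => ?_
    · rw [add_sub_cancel_left]
    · rw [sub_add_cancel_left]; ring
  · simp

lemma evC_mul_evC_inv_add_symm (x y : Fin (n + 1) → ℝ) {z : ℂ} (hz : z ≠ 0) :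
    evC x z * evC y z⁻¹ + evC y z * evC x z⁻¹ = ppC (polar x y) z := by
  rw [evC_mul_evC_inv x y hz, evC_mul_evC_inv y x hz, ppC]
  simp only [polar, Fin.val_zero, Complex.ofReal_add, Finset.sum_add_distrib, add_mul, mul_add]
  ring

lemma evC_mul_evC_inv_self (a : Fin (n + 1) → ℝ) {z : ℂ} (hz : z ≠ 0) :
    evC a z * evC a z⁻¹ = ppC (qc a) z := by
  simp only [evC_mul_evC_inv a a hz, ppC, qc_apply_eq_crossCorr, mul_add]
  rfl

lemma dotProduct_toep_mulVec (c a : Fin (n + 1) → ℝ) :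
    a ⬝ᵥ (Toep c *ᵥ a) = pairCP c (qc a) := by
  set F : ℕ → ℕ → ℝ := fun k l => zeroExt k a * zeroExt l a * zeroExt (max (k - l) (l - k)) c
  have hF : ∀ k l, n + 1 ≤ k ∨ n + 1 ≤ l → F k l = 0 := by
    rintro k l (h | h) <;> simp [F, zeroExt_of_lt (show n < _ from h)]
  have hquad : a ⬝ᵥ (Toep c *ᵥ a) = ∑ k : Fin (n + 1), ∑ l : Fin (n + 1), F k l := by
    simp only [dotProduct, mulVec, Finset.mul_sum]
    refine Finset.sum_congr rfl fun k _ => Finset.sum_congr rfl fun l _ => ?_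
    simp only [F, zeroExt_val]
    simp only [Toep, zeroExt_apply, dif_pos (show max (k - l : ℕ) (l - k) ≤ n by omega)]
    ring
  rw [hquad, sum_sum_eq_upper_add_lower_sub_diag F hF, pairCP]
  simp only [F, zeroExt_val, qc_apply_eq_crossCorr, crossCorr, Finset.mul_sum,
    add_tsub_cancel_left, Nat.sub_self_add, tsub_self, max_self, max_eq_right (Nat.zero_le _),
    max_eq_left (Nat.zero_le _), Fin.val_zero, add_zero, zeroExt_zero]
  rw [← Finset.sum_add_distrib]
  congr 1
  · refine Finset.sum_congr rfl fun t _ => ?_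
    rw [← Finset.sum_add_distrib]
    exact Finset.sum_congr rfl fun i _ => by ring
  · exact Finset.sum_congr rfl fun i _ => by ring

end Laurent

section Schur

open Polynomial

variable {n : ℕ}

def poly (x : Fin (n + 1) → ℝ) : ℂ[X] := ∑ k : Fin (n + 1), C (x k : ℂ) * X ^ (k : ℕ)

def revPoly (x : Fin (n + 1) → ℝ) : ℂ[X] := ∑ k : Fin (n + 1), C (x k : ℂ) * X ^ (n - k)

lemma eval_poly (x : Fin (n + 1) → ℝ) (z : ℂ) : (poly x).eval z = evC x z⁻¹ := by
  simp [poly, evC, eval_finsetSum]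

lemma eval_revPoly (x : Fin (n + 1) → ℝ) (z : ℂ) :
    (revPoly x).eval z = ∑ k : Fin (n + 1), (x k : ℂ) * z ^ (n - k) := by
  simp [revPoly, eval_finsetSum]

lemma eval_revPoly_eq_pow_mul_evC (x : Fin (n + 1) → ℝ) {z : ℂ} (hz : z ≠ 0) :
    (revPoly x).eval z = z ^ n * evC x z := by
  rw [eval_revPoly, evC, Finset.mul_sum]
  refine Finset.sum_congr rfl fun k _ => ?_
  rw [← zpow_natCast, Nat.cast_sub (by omega), zpow_sub₀ hz, _root_.zpow_neg, zpow_natCast,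
    div_eq_mul_inv]
  ring

lemma coeff_poly_zero (x : Fin (n + 1) → ℝ) : (poly x).coeff 0 = x 0 := by
  simp only [poly, finsetSum_coeff, coeff_C_mul, coeff_X_pow]
  rw [Finset.sum_eq_single 0
    (fun j _ hj => by rw [if_neg (fun h => hj (Fin.ext h.symm)), mul_zero]) (by simp)]
  simp

lemma coeff_revPoly (x : Fin (n + 1) → ℝ) (k : Fin (n + 1)) :
    (revPoly x).coeff (n - k) = x k := by
  simp only [revPoly, finsetSum_coeff, coeff_C_mul, coeff_X_pow]
  rw [Finset.sum_eq_single k (fun j _ hj => by rw [if_neg (by omega), mul_zero]) (by simp)]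
  simp

lemma natDegree_revPoly_le (x : Fin (n + 1) → ℝ) : (revPoly x).natDegree ≤ n :=
  natDegree_sum_le_of_forall_le _ _ fun _ _ => (natDegree_C_mul_X_pow_le _ _).trans (Nat.sub_le _ _)

lemma natDegree_revPoly (x : Fin (n + 1) → ℝ) (hx : x 0 ≠ 0) : (revPoly x).natDegree = n :=
  (natDegree_revPoly_le x).antisymm
    (le_natDegree_of_ne_zero (by simpa using (coeff_revPoly x 0).trans_ne (by exact_mod_cast hx)))

lemma eq_zero_of_revPoly_eq_zero {x : Fin (n + 1) → ℝ} (hx : revPoly x = 0) : x = 0 := by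
  funext k
  have hk := coeff_revPoly x k
  rw [hx, coeff_zero] at hk
  exact_mod_cast hk.symm

lemma isCoprime_revPoly_poly {a : Fin (n + 1) → ℝ} (ha : SchurVec a) :
    IsCoprime (revPoly a) (poly a) := by
  rw [isCoprime_iff_aeval_ne_zero_of_isAlgClosed ℂ ℂ]
  intro z
  by_contra! h
  simp only [coe_aeval_eq_eval] at h
  have hz : z ≠ 0 := by
    rintro rfl
    have h0 := h.2
    rw [← coeff_zero_eq_eval_zero, coeff_poly_zero] at h0
    exact ha.1.ne' (by exact_mod_cast h0)
  have hz_lt : ‖z‖ < 1 := ha.2 z (by rw [← eval_revPoly, h.1])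
  have hz_inv_lt : ‖z⁻¹‖ < 1 := ha.2 z⁻¹ (by
    rw [← eval_revPoly, eval_revPoly_eq_pow_mul_evC a (inv_ne_zero hz), ← eval_poly, h.2,
      mul_zero])
  rw [norm_inv, inv_lt_one₀ (norm_pos_iff.2 hz)] at hz_inv_lt
  exact hz_lt.not_gt hz_inv_lt

lemma eq_zero_of_polar_eq_zero {a v : Fin (n + 1) → ℝ} (ha : SchurVec a) (hv : polar a v = 0) :
    v = 0 := by
  have hS : revPoly a * poly v + revPoly v * poly a = 0 := by
    refine eq_zero_of_infinite_isRoot _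
      ((Set.finite_singleton 0).infinite_compl.mono fun z hz => ?_)
    have hz : z ≠ 0 := hz
    simp only [Set.mem_ofPred_eq, IsRoot, eval_add, eval_mul, eval_poly,
      eval_revPoly_eq_pow_mul_evC _ hz]
    rw [mul_assoc, mul_assoc, ← mul_add, evC_mul_evC_inv_add_symm a v hz, hv]
    simp [ppC]
  have ha0 : (a 0 : ℂ) ≠ 0 := by exact_mod_cast ha.1.ne'
  have hrev_a : revPoly a ≠ 0 := fun h => ha0 (by rw [← coeff_revPoly a 0, h, coeff_zero])
  obtain ⟨g, hg⟩ := (isCoprime_revPoly_poly ha).dvd_of_dvd_mul_right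
    (⟨-poly v, by linear_combination hS⟩ : revPoly a ∣ revPoly v * poly a)
  have hg_deg : g.natDegree = 0 := by
    rcases eq_or_ne g 0 with rfl | hg0
    · rfl
    have := natDegree_revPoly_le v
    rw [hg, natDegree_mul hrev_a hg0, natDegree_revPoly a ha.1.ne'] at this
    omega
  obtain ⟨μ, rfl⟩ : ∃ μ, g = C μ := ⟨_, eq_C_of_natDegree_eq_zero hg_deg⟩
  have hv_poly : poly v = -(C μ * poly a) := by
    have : revPoly a * (poly v + C μ * poly a) = 0 := by rw [← hS, hg]; ring
    exact eq_neg_of_add_eq_zero_left ((mul_eq_zero.1 this).resolve_left hrev_a)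
  have hv0_neg : (v 0 : ℂ) = -(μ * a 0) := by
    rw [← coeff_poly_zero, hv_poly, coeff_neg, coeff_C_mul, coeff_poly_zero]
  have hv0_pos : (v 0 : ℂ) = a 0 * μ := by
    rw [← coeff_revPoly v 0, hg, coeff_mul_C, coeff_revPoly]
  have hμ : μ = 0 := by
    have : μ * a 0 = 0 := by linear_combination (hv0_neg - hv0_pos) / 2
    exact (mul_eq_zero.1 this).resolve_right ha0
  exact eq_zero_of_revPoly_eq_zero (by rw [hg, hμ, map_zero, mul_zero])

lemma det_hank_add_utToep_ne_zero {a : Fin (n + 1) → ℝ} (ha : SchurVec a) :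
    (Hank a + UTToep a).det ≠ 0 := by
  intro hdet
  obtain ⟨v, hv0, hv⟩ := exists_mulVec_eq_zero_iff.2 hdet
  exact hv0 (eq_zero_of_polar_eq_zero ha (by rwa [← hank_add_utToep_mulVec]))

end Schur

section ChainRule

variable {n : ℕ}

lemma apply_eq_sum_mul_apply_single {ι : Type*} [Fintype ι] [DecidableEq ι]
    (L : (ι → ℝ) →L[ℝ] ℝ) (w : ι → ℝ) : L w = ∑ k, w k * L (Pi.single k 1) := by
  conv_lhs => rw [← Finset.univ_sum_single w]
  simp only [map_sum]
  refine Finset.sum_congr rfl fun k _ => ?_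
  rw [← smul_eq_mul, ← map_smul, ← Pi.single_smul', smul_eq_mul, mul_one]

lemma gradVec_comp {f : (Fin (n + 1) → ℝ) → ℝ} {g : (Fin (n + 1) → ℝ) → Fin (n + 1) → ℝ}
    {a : Fin (n + 1) → ℝ} (hf : DifferentiableAt ℝ f (g a)) (hg : DifferentiableAt ℝ g a) :
    gradVec (f ∘ g) a =
      (Matrix.of fun i j => fderiv ℝ (fun x => g x i) a (Pi.single j 1))ᵀ *ᵥ gradVec f (g a) := by
  funext i
  simp only [gradVec, fderiv_comp a hf hg, ContinuousLinearMap.comp_apply, mulVec, dotProduct,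
    transpose_apply, of_apply, fderiv_apply hg, ContinuousLinearMap.proj_apply]
  exact apply_eq_sum_mul_apply_single _ _

end ChainRule

section Functional

open ComplexConjugate

variable {n : ℕ}

lemma norm_zeta (N : ℕ) (j : ℤ) : ‖zeta N j‖ = 1 := by
  rw [zeta, show (Real.pi : ℂ) * I * j / N = ((Real.pi * j / N : ℝ) : ℂ) * I by push_cast; ring]
  exact norm_exp_ofReal_mul_I _

lemma evC_conj (x : Fin (n + 1) → ℝ) (z : ℂ) : evC x (conj z) = conj (evC x z) := by
  simp [evC, map_sum]

lemma re_ppC_qc_pos {a : Fin (n + 1) → ℝ} {z : ℂ} (hz : ‖z‖ = 1) (ha : evC a z ≠ 0) :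
    0 < (ppC (qc a) z).re := by
  rw [← evC_mul_evC_inv_self a (norm_pos_iff.1 (hz ▸ one_pos)), inv_eq_conj hz, evC_conj,
    mul_conj, ofReal_re]
  exact normSq_pos.2 ha

lemma jd_eq_fd_comp_qc (N : ℕ) (c b : Fin (n + 1) → ℝ) : Jd N c b = Fd N c b ∘ qc := by
  funext a
  simp only [Jd, Fd, Function.comp_apply, dotProduct_toep_mulVec,
    evC_mul_evC_inv_self a (norm_pos_iff.1 ((norm_zeta N _).symm ▸ one_pos))]

lemma differentiableAt_fd (N : ℕ) (c b : Fin (n + 1) → ℝ) {q : Fin (n + 1) → ℝ}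
    (hq : ∀ j ∈ Idx N, (ppC q (zeta N j)).re ≠ 0) : DifferentiableAt ℝ (Fd N c b) q := by
  unfold Fd pairCP ppC
  fun_prop (disch := simp_all [ppC])

end Functional

theorem stmt11_general (N n : ℕ) (c b : Fin (n + 1) → ℝ) :
    (∀ a : Fin (n + 1) → ℝ, JacQ a = Hank a + UTToep a) ∧
    (∀ a : Fin (n + 1) → ℝ, SchurVec a → (JacQ a).det ≠ 0) ∧
    (∀ a : Fin (n + 1) → ℝ, (∀ j ∈ Idx N, evC a (zeta N j) ≠ 0) →
      gradVec (Jd N c b) a = (JacQ a)ᵀ.mulVec (gradVec (Fd N c b) (qc a))) := by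
  refine ⟨jacQ_eq_hank_add_utToep, fun a ha => ?_, fun a ha => ?_⟩
  · rw [jacQ_eq_hank_add_utToep]
    exact det_hank_add_utToep_ne_zero ha
  · rw [jd_eq_fd_comp_qc]
    exact gradVec_comp
      (differentiableAt_fd N c b fun j hj => (re_ppC_qc_pos (norm_zeta N j) (ha j hj)).ne')
      (differentiableAt_qc a)

/-- (i) the Jacobian `J(a)` of `a ↦ q(a)` is the sum of a Hankel and
an upper-triangular Toeplitz matrix of the coefficients of `a`; (ii) `J(a)` is
nonsingular for every Schur `a`; (iii) the chain rule `∇𝕁_P(a) = J(a)ᵀ ∇F(q(a))`. -/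
theorem stmt11 (N n : ℕ) (hn : 1 ≤ n) (hNn : n < N)
    (c b : Fin (n + 1) → ℝ) (hb0 : b 0 = 1) :
    (∀ a : Fin (n + 1) → ℝ, JacQ a = Hank a + UTToep a) ∧
    (∀ a : Fin (n + 1) → ℝ, SchurVec a → (JacQ a).det ≠ 0) ∧
    (∀ a : Fin (n + 1) → ℝ, (∀ j ∈ Idx N, evC a (zeta N j) ≠ 0) →
      gradVec (Jd N c b) a = (JacQ a)ᵀ.mulVec (gradVec (Fd N c b) (qc a))) :=
  stmt11_general N n c b

end
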